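/- arXiv:2512.09416 — 2 statements merged into one kernel-verified Lean document; each statement's English description precedes it below -/
import Mathlib

section
/- Let A ∈ ℝ^{n×n}, B ∈ ℝ^{n×m}, q ∈ ℝⁿ, x₀ ∈ ℝⁿ, u ∈ ℝᵐ, A ≠ 0, and α > 0. Define x(t) = e^{At} x₀ + (∫₀^t e^{A(t-τ)} dτ) B u and d(t) = qᵀ x(t) - L for a constant L. If 0 ≤ t ≤ ln( α / (‖q‖ (‖x₀‖ + ‖Bu‖/‖A‖)) + 1) / ‖A‖, then |d(t) - d(0)| ≤ α. -/
open scoped Matrix.Norms.L2Operator RealInnerProductSpace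
open Nat

set_option maxHeartbeats 1000000 in
lemma exp_sub_one_norm_le {𝔸 : Type*} [NormedRing 𝔸] [NormedAlgebra ℝ 𝔸] [CompleteSpace 𝔸]
    (M : 𝔸) : ‖NormedSpace.exp M - 1‖ ≤ Real.exp ‖M‖ - 1 := by
  have hs : Summable (fun k : ℕ => ((k ! : ℝ))⁻¹ • M ^ k) := NormedSpace.expSeries_summable' M
  have hns : Summable (fun k : ℕ => ((k ! : ℝ))⁻¹ * ‖M‖ ^ k) := by
    simpa [smul_eq_mul] using NormedSpace.expSeries_summable' (𝕂 := ℝ) (‖M‖ : ℝ)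
  have hgs : Summable (fun k : ℕ => (((k+1)! : ℝ))⁻¹ * ‖M‖ ^ (k+1)) :=
    (summable_nat_add_iff 1).2 hns
  have hbd : ∀ k : ℕ, ‖(((k+1)! : ℝ))⁻¹ • M ^ (k+1)‖ ≤ (((k+1)! : ℝ))⁻¹ * ‖M‖ ^ (k+1) := by
    intro k
    rw [norm_smul, Real.norm_eq_abs, abs_of_nonneg (by positivity)]
    exact mul_le_mul_of_nonneg_left (norm_pow_le' M k.succ_pos) (by positivity)
  have h1 : NormedSpace.exp M - 1 = ∑' k : ℕ, (((k+1)! : ℝ))⁻¹ • M ^ (k + 1) := by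
    simp only [NormedSpace.exp_eq_tsum ℝ]
    rw [Summable.tsum_eq_zero_add hs]
    simp
  have h2 : Real.exp ‖M‖ - 1 = ∑' k : ℕ, (((k+1)! : ℝ))⁻¹ * ‖M‖ ^ (k + 1) := by
    rw [Real.exp_eq_exp_ℝ]
    simp only [NormedSpace.exp_eq_tsum ℝ, smul_eq_mul]
    rw [Summable.tsum_eq_zero_add hns]
    simp
  rw [h1, h2]
  refine (norm_tsum_le_tsum_norm ?_).trans (Summable.tsum_le_tsum hbd ?_ hgs)
  · exact Summable.of_nonneg_of_le (fun k => norm_nonneg _) hbd hgs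
  · exact Summable.of_nonneg_of_le (fun k => norm_nonneg _) hbd hgs

lemma norm_one_matrix_le {n : ℕ} : ‖(1 : Matrix (Fin n) (Fin n) ℝ)‖ ≤ 1 := by
  rw [Matrix.l2_opNorm_def]
  refine ContinuousLinearMap.opNorm_le_bound _ zero_le_one fun x => ?_
  simp [Matrix.toEuclideanLin_apply, Matrix.one_mulVec]

lemma exp_norm_le {n : ℕ} (M : Matrix (Fin n) (Fin n) ℝ) :
    ‖NormedSpace.exp M‖ ≤ Real.exp ‖M‖ := by
  calc ‖NormedSpace.exp M‖ ≤ ‖NormedSpace.exp M - 1‖ + ‖(1 : Matrix (Fin n) (Fin n) ℝ)‖ := by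
        simpa using norm_add_le (NormedSpace.exp M - 1) 1
    _ ≤ (Real.exp ‖M‖ - 1) + 1 := add_le_add (exp_sub_one_norm_le M) norm_one_matrix_le
    _ = Real.exp ‖M‖ := by ring

lemma toEuclideanLin_norm_le {n m : ℕ} (M : Matrix (Fin n) (Fin m) ℝ)
    (v : EuclideanSpace ℝ (Fin m)) : ‖Matrix.toEuclideanLin M v‖ ≤ ‖M‖ * ‖v‖ := by
  simpa [Matrix.toEuclideanLin_apply] using Matrix.l2_opNorm_mulVec M v


/-- core estimate of Theorem 1: with
x(t) = e^{At} x₀ + (∫₀^t e^{A(t-τ)} dτ) B u and d(t) = qᵀ x(t) - L, if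
0 ≤ t ≤ ln(α/(‖q‖(‖x₀‖+‖Bu‖/‖A‖)) + 1)/‖A‖ then |d(t) - d(0)| ≤ α. -/
theorem stmt_8 {n m : ℕ} (A : Matrix (Fin n) (Fin n) ℝ) (B : Matrix (Fin n) (Fin m) ℝ)
    (q x₀ : EuclideanSpace ℝ (Fin n)) (u : EuclideanSpace ℝ (Fin m)) (L : ℝ)
    (hA : A ≠ 0) (α : ℝ) (hα : 0 < α)
    (x : ℝ → EuclideanSpace ℝ (Fin n))
    (hx : ∀ t, x t = Matrix.toEuclideanLin (NormedSpace.exp (t • A)) x₀ +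
      Matrix.toEuclideanLin (∫ τ in (0:ℝ)..t, NormedSpace.exp ((t - τ) • A))
        (Matrix.toEuclideanLin B u))
    (d : ℝ → ℝ) (hd : ∀ t, d t = ⟪q, x t⟫ - L) :
    ∀ t, 0 ≤ t →
      t ≤ Real.log (α / (‖q‖ * (‖x₀‖ + ‖Matrix.toEuclideanLin B u‖ / ‖A‖)) + 1) / ‖A‖ →
      |d t - d 0| ≤ α := by
  intro t ht htle
  have ha0 : 0 < ‖A‖ := norm_pos_iff.2 hA
  set a : ℝ := ‖A‖ with ha
  set v : EuclideanSpace ℝ (Fin n) := Matrix.toEuclideanLin B u with hv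
  set K : ℝ := ‖q‖ * (‖x₀‖ + ‖v‖ / a) with hK
  set E : ℝ := Real.exp (t * a) - 1 with hE
  have hE0 : 0 ≤ E := by
    have : (1:ℝ) ≤ Real.exp (t * a) := Real.one_le_exp (by positivity)
    linarith
  -- x 0 = x₀
  have hx0 : x 0 = x₀ := by
    rw [hx 0]
    simp [Matrix.toEuclideanLin_apply, Matrix.one_mulVec, NormedSpace.exp_zero]
  -- bound on exp(t•A) - 1
  have hexp1 : ‖NormedSpace.exp (t • A) - 1‖ ≤ E := by
    have := exp_sub_one_norm_le (t • A)
    rwa [norm_smul, Real.norm_eq_abs, abs_of_nonneg ht] at this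
  -- bound on the integral
  have hcont : Continuous fun τ : ℝ => NormedSpace.exp ((t - τ) • A) :=
    (continuous_iff_continuousAt.2 fun y => (NormedSpace.exp_analytic (𝕂 := ℝ) y).continuousAt).comp ((continuous_const.sub continuous_id).smul continuous_const)
  have hgint : IntervalIntegrable (fun τ : ℝ => Real.exp ((t - τ) * a)) MeasureTheory.volume 0 t :=
    (Real.continuous_exp.comp ((continuous_const.sub continuous_id).mul continuous_const)).intervalIntegrable 0 t
  have hgval : (∫ τ in (0:ℝ)..t, Real.exp ((t - τ) * a)) = E / a := by
    rw [intervalIntegral.integral_comp_sub_left (fun s => Real.exp (s * a)) t]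
    simp only [sub_zero, sub_self]
    rw [intervalIntegral.integral_comp_mul_right (fun y => Real.exp y) (ne_of_gt ha0)]
    simp [integral_exp, hE, smul_eq_mul, zero_mul, Real.exp_zero, div_eq_inv_mul]
  have hIbd : ‖∫ τ in (0:ℝ)..t, NormedSpace.exp ((t - τ) • A)‖ ≤ E / a := by
    have h1 : ‖∫ τ in (0:ℝ)..t, NormedSpace.exp ((t - τ) • A)‖ ≤
        |∫ τ in (0:ℝ)..t, Real.exp ((t - τ) * a)| := by
      refine intervalIntegral.norm_integral_le_abs_of_norm_le ?_ hgint
      filter_upwards [MeasureTheory.ae_restrict_mem measurableSet_uIoc] with τ hτ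
      rw [Set.uIoc_of_le ht] at hτ
      calc ‖NormedSpace.exp ((t - τ) • A)‖ ≤ Real.exp ‖(t - τ) • A‖ := exp_norm_le _
        _ = Real.exp ((t - τ) * a) := by
            rw [norm_smul, Real.norm_eq_abs, abs_of_nonneg (sub_nonneg.2 hτ.2)]
    rw [hgval, abs_of_nonneg (div_nonneg hE0 ha0.le)] at h1
    exact h1
  -- bound on ‖x t - x 0‖
  have h1e : (Matrix.toEuclideanLin (1 : Matrix (Fin n) (Fin n) ℝ)) x₀ = x₀ := by
    simp [Matrix.toEuclideanLin_apply, Matrix.one_mulVec]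
  have hxt : ‖x t - x 0‖ ≤ E * ‖x₀‖ + (E / a) * ‖v‖ := by
    rw [hx t, hx0]
    have heq : (Matrix.toEuclideanLin (NormedSpace.exp (t • A))) x₀ +
        (Matrix.toEuclideanLin (∫ τ in (0:ℝ)..t, NormedSpace.exp ((t - τ) • A))) v - x₀ =
        (Matrix.toEuclideanLin (NormedSpace.exp (t • A) - 1)) x₀ +
        (Matrix.toEuclideanLin (∫ τ in (0:ℝ)..t, NormedSpace.exp ((t - τ) • A))) v := by
      rw [map_sub, LinearMap.sub_apply, h1e]
      abel
    rw [heq]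
    calc ‖_ + _‖ ≤ ‖(Matrix.toEuclideanLin (NormedSpace.exp (t • A) - 1)) x₀‖ +
          ‖(Matrix.toEuclideanLin (∫ τ in (0:ℝ)..t, NormedSpace.exp ((t - τ) • A))) v‖ :=
        norm_add_le _ _
      _ ≤ ‖NormedSpace.exp (t • A) - 1‖ * ‖x₀‖ +
          ‖∫ τ in (0:ℝ)..t, NormedSpace.exp ((t - τ) • A)‖ * ‖v‖ :=
        add_le_add (toEuclideanLin_norm_le _ _) (toEuclideanLin_norm_le _ _)
      _ ≤ E * ‖x₀‖ + (E / a) * ‖v‖ :=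
        add_le_add (mul_le_mul_of_nonneg_right hexp1 (norm_nonneg _))
          (mul_le_mul_of_nonneg_right hIbd (norm_nonneg _))
  have hqd : |d t - d 0| ≤ ‖q‖ * ‖x t - x 0‖ := by
    rw [hd t, hd 0]
    calc |(⟪q, x t⟫ - L) - (⟪q, x 0⟫ - L)| = |⟪q, x t - x 0⟫| := by
          rw [inner_sub_right]; ring_nf
      _ ≤ ‖q‖ * ‖x t - x 0‖ := abs_real_inner_le_norm q _
  have hmain : |d t - d 0| ≤ E * K := by
    calc |d t - d 0| ≤ ‖q‖ * ‖x t - x 0‖ := hqd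
      _ ≤ ‖q‖ * (E * ‖x₀‖ + (E / a) * ‖v‖) :=
        mul_le_mul_of_nonneg_left hxt (norm_nonneg _)
      _ = E * K := by rw [hK]; field_simp
  have hKnn : 0 ≤ K := by
    rw [hK]; positivity
  by_cases hK0 : K = 0
  · rw [hK0, mul_zero] at hmain
    exact hmain.trans hα.le
  · have hKpos : 0 < K := lt_of_le_of_ne hKnn (Ne.symm hK0)
    have hta : t * a ≤ Real.log (α / K + 1) := (le_div_iff₀ ha0).1 htle
    have hEle : E ≤ α / K := by
      have h2 : Real.exp (t * a) ≤ α / K + 1 := by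
        calc Real.exp (t * a) ≤ Real.exp (Real.log (α / K + 1)) := Real.exp_le_exp.2 hta
          _ = α / K + 1 := Real.exp_log (by positivity)
      rw [hE]; linarith
    calc |d t - d 0| ≤ E * K := hmain
      _ ≤ (α / K) * K := mul_le_mul_of_nonneg_right hEle hKnn
      _ = α := div_mul_cancel₀ α hK0
end

section
/- Let à ∈ ℝ^{N×N} with μ(Ã) > 0, where μ(Ã) = λ_max((Ã+Ãᵀ)/2), let c ∈ ℝ^N, x̃₀ ∈ ℝ^N with x̃₀ ≠ 0, φ ≥ ‖c‖, φ > 0, and α > 0. Define x̃(t) = e^{Ã t} x̃₀ and d(t) = d(0) + ∫₀^t cᵀ x̃(s) ds. If 0 ≤ t ≤ ln( μ(Ã) α / (φ ‖x̃₀‖) + 1) / μ(Ã), then |d(t) - d(0)| ≤ α. -/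
open Matrix
open scoped RealInnerProductSpace

/-- The symmetric part (Ã + Ãᵀ)/2 of a real matrix is Hermitian (symmetric). -/
theorem symPart_isHermitian {n : Type*} [Fintype n] [DecidableEq n]
    (A : Matrix n n ℝ) : (((2:ℝ)⁻¹) • (A + Aᵀ)).IsHermitian := by
  unfold Matrix.IsHermitian
  ext i j
  simp [Matrix.conjTranspose_apply, Matrix.transpose_apply, Matrix.add_apply, add_comm, mul_add]

/-- Logarithmic norm μ(Ã) = λ_max((Ã + Ãᵀ)/2). -/
noncomputable def logNorm {n : Type*} [Fintype n] [DecidableEq n]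
    (A : Matrix n n ℝ) : ℝ :=
  ⨆ i, (symPart_isHermitian A).eigenvalues i

theorem aux_inner_transpose_self {n : Type*} [Fintype n] [DecidableEq n] (A : Matrix n n ℝ)
    (x : EuclideanSpace ℝ n) :
    ⟪x, Matrix.toEuclideanLin Aᵀ x⟫ = ⟪x, Matrix.toEuclideanLin A x⟫ := by
  rw [EuclideanSpace.inner_eq_star_dotProduct, EuclideanSpace.inner_eq_star_dotProduct,
    toEuclideanLin_apply, toEuclideanLin_apply, WithLp.ofLp_toLp, WithLp.ofLp_toLp,
    star_trivial, dotProduct_comm, Matrix.dotProduct_mulVec, Matrix.vecMul_transpose]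

/-- Rayleigh-type bound: `⟪x, A x⟫ ≤ μ(A) ‖x‖²`. -/
theorem aux_rayleigh_le {n : Type*} [Fintype n] [DecidableEq n] [Nonempty n]
    (A : Matrix n n ℝ) (x : EuclideanSpace ℝ n) :
    ⟪x, Matrix.toEuclideanLin A x⟫ ≤ logNorm A * ‖x‖ ^ 2 := by
  set S : Matrix n n ℝ := ((2:ℝ)⁻¹) • (A + Aᵀ) with hSdef
  have hS := symPart_isHermitian A
  have h1 : ⟪x, Matrix.toEuclideanLin A x⟫ = ⟪x, Matrix.toEuclideanLin S x⟫ := by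
    rw [hSdef]
    rw [_root_.map_smul, map_add]
    simp only [LinearMap.smul_apply, LinearMap.add_apply, inner_smul_right, inner_add_right,
      aux_inner_transpose_self]
    ring
  rw [h1]
  have hsym : (Matrix.toEuclideanLin S).IsSymmetric :=
    Matrix.isHermitian_iff_isSymmetric.mp hS
  set b := hS.eigenvectorBasis with hb
  have hbev : ∀ i, Matrix.toEuclideanLin S (b i) = hS.eigenvalues i • b i := by
    intro i
    apply (WithLp.equiv 2 (n → ℝ)).injective
    rw [WithLp.equiv_apply, Matrix.ofLp_toEuclideanLin_apply]
    have := hS.mulVec_eigenvectorBasis i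
    ext j
    have h2 := congrFun this j
    simp only [hSdef] at h2 ⊢
    simp only [hb]
    exact h2
  have hexp : ⟪x, Matrix.toEuclideanLin S x⟫
      = ∑ i, hS.eigenvalues i * (⟪x, b i⟫ * ⟪b i, x⟫) := by
    rw [← b.sum_inner_mul_inner x (Matrix.toEuclideanLin S x)]
    congr 1
    ext i
    rw [← hsym (b i) x, hbev i, real_inner_smul_left]
    ring
  rw [hexp]
  have hnorm : ‖x‖ ^ 2 = ∑ i, ⟪x, b i⟫ * ⟪b i, x⟫ := by
    rw [b.sum_inner_mul_inner x x, real_inner_self_eq_norm_sq]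
  rw [hnorm, Finset.mul_sum]
  apply Finset.sum_le_sum
  intro i _
  have hnn : 0 ≤ ⟪x, b i⟫ * ⟪b i, x⟫ := by
    rw [real_inner_comm (b i) x]; exact mul_self_nonneg _
  exact mul_le_mul_of_nonneg_right (le_ciSup (Set.Finite.bddAbove (Set.finite_range _)) i) hnn

/-- core estimate of Theorem 2: with x̃(t) = e^{Ãt} x̃₀ and
d(t) = d(0) + ∫₀^t cᵀ x̃(s) ds, if μ(Ã) > 0, φ ≥ ‖c‖, φ > 0, α > 0 and
0 ≤ t ≤ ln(μ(Ã)α/(φ‖x̃₀‖) + 1)/μ(Ã), then |d(t) - d(0)| ≤ α. -/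
theorem stmt_10 {N : ℕ} (A : Matrix (Fin N) (Fin N) ℝ) (hμ : 0 < logNorm A)
    (c x₀ : EuclideanSpace ℝ (Fin N)) (hx₀ : x₀ ≠ 0)
    (φ : ℝ) (hφc : ‖c‖ ≤ φ) (hφ : 0 < φ) (α : ℝ) (hα : 0 < α)
    (xt : ℝ → EuclideanSpace ℝ (Fin N))
    (hxt : ∀ s, xt s = Matrix.toEuclideanLin (NormedSpace.exp (s • A)) x₀)
    (d : ℝ → ℝ) (d0 : ℝ)
    (hd : ∀ t, d t = d0 + ∫ s in (0:ℝ)..t, ⟪c, xt s⟫) :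
    ∀ t, 0 ≤ t → t ≤ Real.log (logNorm A * α / (φ * ‖x₀‖) + 1) / logNorm A →
      |d t - d 0| ≤ α := by
  intro t ht0 ht1
  set μ := logNorm A with hμdef
  haveI hNE : Nonempty (Fin N) := by
    by_contra h
    apply hx₀
    ext i
    exact absurd ⟨i⟩ h
  have hx0pos : (0:ℝ) < ‖x₀‖ := norm_pos_iff.mpr hx₀
  -- derivative of xt
  letI : SeminormedRing (Matrix (Fin N) (Fin N) ℝ) := Matrix.linftyOpSemiNormedRing
  letI : NormedRing (Matrix (Fin N) (Fin N) ℝ) := Matrix.linftyOpNormedRing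
  letI : NormedAlgebra ℝ (Matrix (Fin N) (Fin N) ℝ) := Matrix.linftyOpNormedAlgebra
  let L : Matrix (Fin N) (Fin N) ℝ →ₗ[ℝ] EuclideanSpace ℝ (Fin N) :=
    { toFun := fun M => Matrix.toEuclideanLin M x₀
      map_add' := by intro M₁ M₂; simp only [map_add]; rfl
      map_smul' := by intro r M; simp only [_root_.map_smul]; rfl }
  let Lc := LinearMap.toContinuousLinearMap L
  have hmul : ∀ (M : Matrix (Fin N) (Fin N) ℝ) (v : EuclideanSpace ℝ (Fin N)),
      Matrix.toEuclideanLin (A * M) v = Matrix.toEuclideanLin A (Matrix.toEuclideanLin M v) := by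
    intro M v
    apply (WithLp.equiv 2 (Fin N → ℝ)).injective
    simp only [WithLp.equiv_apply, Matrix.ofLp_toEuclideanLin_apply,
      Matrix.mulVec_mulVec]
  have hD : ∀ s, HasDerivAt xt (Matrix.toEuclideanLin A (xt s)) s := by
    intro s
    have hE : HasDerivAt (fun u : ℝ => NormedSpace.exp (u • A))
        (A * NormedSpace.exp (s • A)) s := hasDerivAt_exp_smul_const' A s
    have h1 : HasDerivAt (fun u => Lc (NormedSpace.exp (u • A)))
        (Lc (A * NormedSpace.exp (s • A))) s :=
      (Lc.hasFDerivAt.comp_hasDerivAt s hE)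
    have h2 : (fun u => Lc (NormedSpace.exp (u • A))) = xt := by
      funext u
      simp only [Lc, LinearMap.coe_toContinuousLinearMap', L, LinearMap.coe_mk,
        AddHom.coe_mk, hxt u]
    have h3 : Lc (A * NormedSpace.exp (s • A)) = Matrix.toEuclideanLin A (xt s) := by
      simp only [Lc, LinearMap.coe_toContinuousLinearMap', L, LinearMap.coe_mk,
        AddHom.coe_mk, hxt s, hmul]
    rwa [h2, h3] at h1
  have hx00 : xt 0 = x₀ := by
    rw [hxt 0, zero_smul, NormedSpace.exp_zero]
    apply (WithLp.equiv 2 (Fin N → ℝ)).injective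
    simp [Matrix.ofLp_toEuclideanLin_apply]
  have hcont : Continuous xt := continuous_iff_continuousAt.mpr fun s => (hD s).continuousAt
  -- the exponential norm bound via a Grönwall-type argument
  have key : ∀ s, 0 ≤ s → ‖xt s‖ ≤ ‖x₀‖ * Real.exp (μ * s) := by
    set h : ℝ → ℝ := fun s => ‖xt s‖ ^ 2 * Real.exp (-(2*μ)*s) with hhdef
    have hh : ∀ s, HasDerivAt h
        ((2 * ⟪xt s, Matrix.toEuclideanLin A (xt s)⟫) * Real.exp (-(2*μ)*s)
          + ‖xt s‖ ^ 2 * (Real.exp (-(2*μ)*s) * -(2*μ))) s := by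
      intro s
      have hg : HasDerivAt (fun u => ‖xt u‖ ^ 2)
          (2 * ⟪xt s, Matrix.toEuclideanLin A (xt s)⟫) s := by
        have hi := HasDerivAt.inner ℝ (hD s) (hD s)
        have heq : (fun u => ⟪xt u, xt u⟫) = fun u => ‖xt u‖ ^ 2 :=
          funext fun u => real_inner_self_eq_norm_sq _
        rw [heq] at hi
        refine hi.congr_deriv ?_
        rw [real_inner_comm (Matrix.toEuclideanLin A (xt s)) (xt s)]
        ring
      have he : HasDerivAt (fun u => Real.exp (-(2*μ)*u))
          (Real.exp (-(2*μ)*s) * -(2*μ)) s := by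
        have := ((hasDerivAt_id s).const_mul (-(2*μ))).exp
        simpa [mul_comm] using this
      exact hg.mul he
    have hanti : Antitone h := by
      apply antitone_of_deriv_nonpos
      · exact fun s => (hh s).differentiableAt
      · intro s
        rw [(hh s).deriv]
        have hr := aux_rayleigh_le A (xt s)
        have hexp : (0:ℝ) < Real.exp (-(2*μ)*s) := Real.exp_pos _
        nlinarith [mul_le_mul_of_nonneg_right hr hexp.le]
    intro s hs
    have h2 := hanti hs
    have h0 : h 0 = ‖x₀‖ ^ 2 := by
      simp [hhdef, hx00]
    rw [h0, hhdef] at h2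
    have h3 : ‖xt s‖ ^ 2 ≤ (‖x₀‖ * Real.exp (μ * s)) ^ 2 := by
      have hepos : (0:ℝ) < Real.exp (-(2*μ)*s) := Real.exp_pos _
      rw [mul_pow, ← Real.exp_nat_mul]
      have : Real.exp (2 * (μ * s)) = (Real.exp (-(2*μ)*s))⁻¹ := by
        rw [← Real.exp_neg]; ring_nf
      rw [show ((2:ℕ):ℝ) * (μ * s) = 2 * (μ * s) by norm_num, this,
        ← div_eq_mul_inv, le_div_iff₀ hepos]
      exact h2
    exact (pow_le_pow_iff_left₀ (norm_nonneg _) (by positivity) two_ne_zero).mp h3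
  -- the integral estimate
  have hfc : Continuous fun s => ⟪c, xt s⟫ := Continuous.inner continuous_const hcont
  have hd0 : d 0 = d0 := by rw [hd 0, intervalIntegral.integral_same, add_zero]
  have hdt : d t - d 0 = ∫ s in (0:ℝ)..t, ⟪c, xt s⟫ := by rw [hd t, hd0]; ring
  have hint_exp : ∫ s in (0:ℝ)..t, φ * ‖x₀‖ * Real.exp (μ * s)
      = φ * ‖x₀‖ * ((Real.exp (μ * t) - 1) / μ) := by
    have hF : ∀ s ∈ Set.uIcc (0:ℝ) t, HasDerivAt (fun u => φ * ‖x₀‖ * (Real.exp (μ * u) / μ))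
        (φ * ‖x₀‖ * Real.exp (μ * s)) s := by
      intro s _
      have h1 := (Real.hasDerivAt_exp (μ * s)).comp s ((hasDerivAt_id s).const_mul μ)
      have h2 := (h1.div_const μ).const_mul (φ * ‖x₀‖)
      refine h2.congr_deriv ?_
      field_simp
    rw [intervalIntegral.integral_eq_sub_of_hasDerivAt hF
      (Continuous.intervalIntegrable (by fun_prop) _ _)]
    rw [mul_zero, Real.exp_zero]
    ring
  have habs : |d t - d 0| ≤ φ * ‖x₀‖ * ((Real.exp (μ * t) - 1) / μ) := by
    rw [hdt]
    calc |∫ s in (0:ℝ)..t, ⟪c, xt s⟫|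
        ≤ ∫ s in (0:ℝ)..t, |⟪c, xt s⟫| :=
          intervalIntegral.abs_integral_le_integral_abs ht0
      _ ≤ ∫ s in (0:ℝ)..t, φ * ‖x₀‖ * Real.exp (μ * s) := by
          apply intervalIntegral.integral_mono_on ht0
          · exact (hfc.abs).intervalIntegrable _ _
          · exact Continuous.intervalIntegrable (by fun_prop) _ _
          · intro s hs
            calc |⟪c, xt s⟫| ≤ ‖c‖ * ‖xt s‖ := abs_real_inner_le_norm _ _
              _ ≤ φ * (‖x₀‖ * Real.exp (μ * s)) := by
                  apply mul_le_mul hφc (key s hs.1) (norm_nonneg _) hφ.le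
              _ = φ * ‖x₀‖ * Real.exp (μ * s) := by ring
      _ = φ * ‖x₀‖ * ((Real.exp (μ * t) - 1) / μ) := hint_exp
  -- final numeric estimate
  have hK : (0:ℝ) < μ * α / (φ * ‖x₀‖) := by positivity
  have hexp_le : Real.exp (μ * t) ≤ μ * α / (φ * ‖x₀‖) + 1 := by
    have hμt : μ * t ≤ Real.log (μ * α / (φ * ‖x₀‖) + 1) := by
      rw [le_div_iff₀ hμ] at ht1
      linarith [ht1]
    calc Real.exp (μ * t) ≤ Real.exp (Real.log (μ * α / (φ * ‖x₀‖) + 1)) :=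
          Real.exp_le_exp.mpr hμt
      _ = μ * α / (φ * ‖x₀‖) + 1 := Real.exp_log (by linarith)
  calc |d t - d 0| ≤ φ * ‖x₀‖ * ((Real.exp (μ * t) - 1) / μ) := habs
    _ ≤ φ * ‖x₀‖ * ((μ * α / (φ * ‖x₀‖)) / μ) := by gcongr; linarith
    _ = α := by field_simp
end
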